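/- (Hersch–Szegő normalization, existence.) Let Ω ⊂ ℂ be a bounded open set, let f : Ω → ℝ be integrable with f ≥ 0 and ∫_Ω f dA > 0, and let g : [0,1] → ℝ be continuous with g(0) = 0 and g(1) > 0. Define v : 𝔻̄ → ℂ by v(z) = g(|z|)·z/|z| for z ≠ 0 and v(0) = 0 (v is continuous). Let T : Ω → 𝔻 be continuous, and for w ∈ 𝔻̄ define V(w) = ∫_Ω v(M_w(T(z))) f(z) dA(z). Then V is continuous on 𝔻̄, V(w) = g(1)·(∫_Ω f dA)·w ≠ 0 for every w with |w| = 1, and there exists w ∈ 𝔻 with V(w) = 0. -/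

import Mathlib

/-!
On the unit circle `M_w` is constant equal to `w`, so there `V w = c * w` with
`c = g 1 * ∫ f ≠ 0`; continuity of `V` is dominated convergence, `v` being bounded on the disk.
If `V` had no zero in the open disk it would vanish nowhere on the closed disk, hence have a
continuous logarithm there (`exp` is a covering map onto `ℂ \ {0}`). On the circle this would be
a continuous logarithm of `c * z`, impossible: `θ ↦ log (c * exp (θ i)) - θ i` would be a
continuous lift of a constant, hence constant, yet it drops by `2πi` over a full turn.
-/

open Complex Metric Set MeasureTheory

/-- The Möbius map `M_w(z) = (z + w)/(z·conj(w) + 1)`. -/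
noncomputable def Mob (w z : ℂ) : ℂ := (z + w) / (z * (starRingEnd ℂ) w + 1)

open Classical in
/-- The function `v(z) = g(|z|)·z/|z|` for `z ≠ 0`, with `v(0) = 0`. -/
noncomputable def vfun (g : ℝ → ℝ) (z : ℂ) : ℂ :=
  if z = 0 then 0 else (g ‖z‖ : ℂ) * z / (‖z‖ : ℂ)

open ComplexConjugate

section Mob

variable {w z : ℂ}

theorem mob_denom_ne_zero (hz : ‖z‖ < 1) (hw : ‖w‖ ≤ 1) : z * conj w + 1 ≠ 0 := by
  have : ‖z * conj w‖ < 1 := by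
    rw [norm_mul, norm_conj]
    exact (mul_le_of_le_one_right (norm_nonneg z) hw).trans_lt hz
  intro h
  rw [eq_neg_of_add_eq_zero_left h, norm_neg, norm_one] at this
  exact this.false

theorem normSq_mob_denom_sub_normSq_mob_num (w z : ℂ) :
    normSq (z * conj w + 1) - normSq (z + w) = (1 - normSq z) * (1 - normSq w) := by
  simp only [normSq_apply, add_re, add_im, mul_re, mul_im, conj_re, conj_im, one_re, one_im]
  ring

theorem mob_mem_closedBall (hz : z ∈ ball 0 1) (hw : w ∈ closedBall 0 1) :
    Mob w z ∈ closedBall 0 1 := by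
  rw [mem_ball_zero_iff] at hz
  rw [mem_closedBall_zero_iff] at hw ⊢
  have hz' : normSq z ≤ 1 := by rw [← Complex.sq_norm]; nlinarith [norm_nonneg z]
  have hw' : normSq w ≤ 1 := by rw [← Complex.sq_norm]; nlinarith [norm_nonneg w]
  have hsq : normSq (z + w) ≤ normSq (z * conj w + 1) := by
    nlinarith [normSq_mob_denom_sub_normSq_mob_num w z]
  rw [Mob, norm_div, div_le_one (norm_pos_iff.mpr (mob_denom_ne_zero hz hw))]
  rw [← Complex.sq_norm, ← Complex.sq_norm] at hsq
  exact (sq_le_sq₀ (norm_nonneg _) (norm_nonneg _)).mp hsq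

theorem mob_of_norm_eq_one (hz : ‖z‖ < 1) (hw : ‖w‖ = 1) : Mob w z = w := by
  rw [Mob, div_eq_iff (mob_denom_ne_zero hz hw.le)]
  have : w * conj w = 1 := by rw [mul_conj, normSq_eq_norm_sq, hw]; norm_num
  linear_combination (-z) * this

theorem continuousOn_mob_left (hz : ‖z‖ < 1) :
    ContinuousOn (fun w => Mob w z) (closedBall 0 1) :=
  ContinuousOn.div (by fun_prop) (by fun_prop) fun _ hw =>
    mob_denom_ne_zero hz (mem_closedBall_zero_iff.mp hw)

theorem continuousOn_mob_right (hw : ‖w‖ ≤ 1) : ContinuousOn (Mob w) (ball 0 1) :=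
  ContinuousOn.div (by fun_prop) (by fun_prop) fun _ hz =>
    mob_denom_ne_zero (mem_ball_zero_iff.mp hz) hw

end Mob

section vfun

variable {g : ℝ → ℝ}

theorem norm_vfun (hg0 : g 0 = 0) (z : ℂ) : ‖vfun g z‖ = |g ‖z‖| := by
  by_cases hz : z = 0
  · simp [vfun, hz, hg0]
  · have : (0 : ℝ) < ‖z‖ := norm_pos_iff.mpr hz
    rw [vfun, if_neg hz, mul_div_assoc, norm_mul, norm_real, Real.norm_eq_abs, norm_div,
      norm_real, Real.norm_of_nonneg this.le, div_self this.ne', mul_one]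

theorem vfun_of_norm_eq_one {z : ℂ} (hz : ‖z‖ = 1) : vfun g z = g 1 * z := by
  have : z ≠ 0 := by rintro rfl; simp at hz
  simp [vfun, this, hz]

theorem continuousOn_vfun {r : ℝ} (hg : ContinuousOn g (Icc 0 r)) (hg0 : g 0 = 0) :
    ContinuousOn (vfun g) (closedBall 0 r) := by
  have hnorm : MapsTo (‖·‖) (closedBall (0 : ℂ) r) (Icc 0 r) :=
    fun z hz => ⟨norm_nonneg z, mem_closedBall_zero_iff.mp hz⟩
  have hgn : ContinuousOn (fun z : ℂ => g ‖z‖) (closedBall 0 r) :=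
    hg.comp continuous_norm.continuousOn hnorm
  intro z hz
  by_cases hz0 : z = 0
  · subst hz0
    have : Filter.Tendsto (fun t : ℂ => |g ‖t‖|) (nhdsWithin 0 (closedBall 0 r)) (nhds 0) := by
      simpa [ContinuousWithinAt, hg0] using (hgn 0 hz).abs
    rw [ContinuousWithinAt, show vfun g 0 = 0 by simp [vfun], tendsto_zero_iff_norm_tendsto_zero]
    simpa only [norm_vfun hg0] using this
  · have hev : vfun g =ᶠ[nhdsWithin z (closedBall 0 r)] fun t => (g ‖t‖ : ℂ) * t / ‖t‖ := by
      filter_upwards [eventually_nhdsWithin_of_eventually_nhds (eventually_ne_nhds hz0)] with t ht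
      simp [vfun, ht]
    refine ContinuousWithinAt.congr_of_eventuallyEq ?_ hev (by simp [vfun, hz0])
    have hgz := continuous_ofReal.continuousAt.comp_continuousWithinAt (hgn z hz)
    exact (hgz.mul continuousWithinAt_id).div (by fun_prop) (by simpa using hz0)

end vfun

section integral

variable {α : Type*} [MeasurableSpace α] {μ : Measure α} {s : Set α} {T : α → ℂ} {f : α → ℝ}
  {φ : ℂ → ℂ}

theorem setIntegral_comp_mob_of_norm_eq_one (hs : MeasurableSet s) (hTs : MapsTo T s (ball 0 1))
    {w : ℂ} (hw : ‖w‖ = 1) :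
    ∫ z in s, φ (Mob w (T z)) * f z ∂μ = φ w * ((∫ z in s, f z ∂μ : ℝ) : ℂ) := by
  rw [setIntegral_congr_fun hs fun z hz => by
    rw [mob_of_norm_eq_one (mem_ball_zero_iff.mp (hTs hz)) hw], integral_const_mul,
    integral_complex_ofReal]

variable [TopologicalSpace α] [OpensMeasurableSpace α]

theorem continuousOn_setIntegral_comp_mob (hφ : ContinuousOn φ (closedBall 0 1))
    (hs : MeasurableSet s) (hT : ContinuousOn T s) (hTs : MapsTo T s (ball 0 1))
    (hf : IntegrableOn f s μ) :
    ContinuousOn (fun w => ∫ z in s, φ (Mob w (T z)) * f z ∂μ) (closedBall 0 1) := by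
  obtain ⟨C, hC⟩ := (isCompact_closedBall (0 : ℂ) 1).exists_bound_of_continuousOn hφ
  refine continuousOn_of_dominated (bound := fun z => C * ‖f z‖) (fun w hw => ?_)
    (fun w hw => ?_) (hf.norm.const_mul C) ?_
  · have hφT : ContinuousOn (fun z => φ (Mob w (T z))) s :=
      hφ.comp ((continuousOn_mob_right (mem_closedBall_zero_iff.mp hw)).comp hT hTs)
        fun z hz => mob_mem_closedBall (hTs hz) hw
    exact (hφT.aestronglyMeasurable hs).mul
      (continuous_ofReal.comp_aestronglyMeasurable hf.aestronglyMeasurable)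
  · refine (ae_restrict_iff' hs).mpr (ae_of_all _ fun z hz => ?_)
    rw [norm_mul, norm_real]
    exact mul_le_mul_of_nonneg_right (hC _ (mob_mem_closedBall (hTs hz) hw)) (norm_nonneg _)
  · refine (ae_restrict_iff' hs).mpr (ae_of_all _ fun z hz => ?_)
    exact (hφ.comp (continuousOn_mob_left (mem_ball_zero_iff.mp (hTs hz)))
      fun w hw => mob_mem_closedBall (hTs hz) hw).mul continuousOn_const

end integral

theorem exists_continuous_exp_eq_of_ne_zero {W : ℂ → ℂ} (hW : ContinuousOn W (closedBall 0 1))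
    (hW0 : ∀ w ∈ closedBall (0 : ℂ) 1, W w ≠ 0) :
    ∃ L : ℂ → ℂ, Continuous L ∧ ∀ w ∈ closedBall (0 : ℂ) 1, exp (L w) = W w := by
  -- Lift on all of the simply connected `ℂ`, after retracting it onto the disk.
  have hr_mem (z : ℂ) : z / max 1 ‖z‖ ∈ closedBall (0 : ℂ) 1 := by
    rw [mem_closedBall_zero_iff, norm_div, Complex.norm_real, Real.norm_of_nonneg
      (zero_le_one.trans (le_max_left _ _))]
    exact div_le_one_of_le₀ (le_max_right _ _) (zero_le_one.trans (le_max_left _ _))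
  have hr_eq {z : ℂ} (hz : z ∈ closedBall (0 : ℂ) 1) : z / max 1 ‖z‖ = z := by
    rw [max_eq_left (mem_closedBall_zero_iff.mp hz), Complex.ofReal_one, div_one]
  have hr_cont : Continuous fun z : ℂ => z / max 1 ‖z‖ :=
    continuous_id.div (by fun_prop) fun z => by
      exact_mod_cast (zero_lt_one.trans_le (le_max_left 1 ‖z‖)).ne'
  let F : C(ℂ, ℂ) := ⟨fun z => W (z / max 1 ‖z‖), hW.comp_continuous hr_cont hr_mem⟩
  obtain ⟨L, ⟨-, hL⟩, -⟩ := isCoveringMapOn_exp.existsUnique_continuousMap_lifts F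
    (a₀ := 0) (e₀ := log (W 0)) (by simp [F, exp_log (hW0 0 (by simp))])
    fun z => hW0 _ (hr_mem z)
  refine ⟨L, L.continuous, fun w hw => ?_⟩
  simpa [F, hr_eq hw] using congrFun hL w

theorem not_forall_exp_eq_mul_on_sphere {L : ℂ → ℂ} (hL : ContinuousOn L (sphere 0 1)) (c : ℂ) :
    ¬ ∀ z ∈ sphere (0 : ℂ) 1, exp (L z) = c * z := by
  intro hLc
  have hmem (θ : ℝ) : exp (θ * I) ∈ sphere (0 : ℂ) 1 := by simp
  have hconst := isCoveringMap_exp.const_of_comp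
    (g := fun θ : ℝ => L (exp (θ * I)) - θ * I)
    ((hL.comp_continuous (by fun_prop) hmem).sub (by fun_prop))
    (fun a a' => Subtype.ext <| by
      simp only [exp_sub, hLc _ (hmem _), mul_div_cancel_right₀ _ (exp_ne_zero _)])
    0 (2 * Real.pi)
  have hturn : exp (((2 * Real.pi : ℝ) : ℂ) * I) = exp ((0 : ℝ) * I) := by
    rw [ofReal_zero, zero_mul, exp_zero]; push_cast; exact exp_two_pi_mul_I
  simp only [hturn] at hconst
  have h2pi : 2 * Real.pi * I = 0 := by push_cast at hconst; linear_combination hconst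
  simp [Real.pi_ne_zero] at h2pi

theorem exists_mem_ball_eq_zero_of_eq_mul_on_sphere {W : ℂ → ℂ}
    (hW : ContinuousOn W (closedBall 0 1)) {c : ℂ} (hc : c ≠ 0)
    (hWc : ∀ w : ℂ, ‖w‖ = 1 → W w = c * w) : ∃ w ∈ ball (0 : ℂ) 1, W w = 0 := by
  by_contra! hW0
  have hW0' (w : ℂ) (hw : w ∈ closedBall (0 : ℂ) 1) : W w ≠ 0 := by
    rcases (mem_closedBall_zero_iff.mp hw).lt_or_eq with hw1 | hw1
    · exact hW0 w (mem_ball_zero_iff.mpr hw1)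
    · rw [hWc w hw1]
      exact mul_ne_zero hc (norm_ne_zero_iff.mp (hw1 ▸ one_ne_zero))
  obtain ⟨L, hL, hLW⟩ := exists_continuous_exp_eq_of_ne_zero hW hW0'
  exact not_forall_exp_eq_mul_on_sphere hL.continuousOn c fun z hz => by
    rw [hLW z (sphere_subset_closedBall hz), hWc z (mem_sphere_zero_iff_norm.mp hz)]

theorem stmt13_general (Ω : Set ℂ) (hΩo : IsOpen Ω)
    (f : ℂ → ℝ) (hfi : IntegrableOn f Ω)
    (hfpos : 0 < ∫ z in Ω, f z)
    (g : ℝ → ℝ) (hgc : ContinuousOn g (Set.Icc 0 1)) (hg0 : g 0 = 0) (hg1 : 0 < g 1)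
    (T : ℂ → ℂ) (hTc : ContinuousOn T Ω) (hTmap : ∀ z ∈ Ω, T z ∈ ball (0:ℂ) 1)
    (V : ℂ → ℂ)
    (hV : ∀ w : ℂ, V w = ∫ z in Ω, vfun g (Mob w (T z)) * (f z : ℂ)) :
    ContinuousOn V (closedBall (0:ℂ) 1) ∧
    (∀ w : ℂ, ‖w‖ = 1 →
      V w = (g 1 : ℂ) * ((∫ z in Ω, f z : ℝ) : ℂ) * w ∧ V w ≠ 0) ∧
    ∃ w ∈ ball (0:ℂ) 1, V w = 0 := by
  have hcont : ContinuousOn V (closedBall 0 1) := by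
    rw [funext hV]
    exact continuousOn_setIntegral_comp_mob (continuousOn_vfun hgc hg0) hΩo.measurableSet hTc
      hTmap hfi
  have hbd (w : ℂ) (hw : ‖w‖ = 1) : V w = (g 1 : ℂ) * ((∫ z in Ω, f z : ℝ) : ℂ) * w := by
    rw [hV, setIntegral_comp_mob_of_norm_eq_one hΩo.measurableSet hTmap hw,
      vfun_of_norm_eq_one hw]
    ring
  have hc : (g 1 : ℂ) * ((∫ z in Ω, f z : ℝ) : ℂ) ≠ 0 := by
    exact_mod_cast (mul_pos hg1 hfpos).ne'
  refine ⟨hcont, fun w hw => ⟨hbd w hw, ?_⟩,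
    exists_mem_ball_eq_zero_of_eq_mul_on_sphere hcont hc hbd⟩
  rw [hbd w hw]
  exact mul_ne_zero hc (norm_ne_zero_iff.mp (hw ▸ one_ne_zero))

theorem stmt13 (Ω : Set ℂ) (hΩo : IsOpen Ω) (hΩb : Bornology.IsBounded Ω)
    (f : ℂ → ℝ) (hfi : IntegrableOn f Ω)
    (hf0 : ∀ z ∈ Ω, 0 ≤ f z) (hfpos : 0 < ∫ z in Ω, f z)
    (g : ℝ → ℝ) (hgc : ContinuousOn g (Set.Icc 0 1)) (hg0 : g 0 = 0) (hg1 : 0 < g 1)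
    (T : ℂ → ℂ) (hTc : ContinuousOn T Ω) (hTmap : ∀ z ∈ Ω, T z ∈ ball (0:ℂ) 1)
    (V : ℂ → ℂ)
    (hV : ∀ w : ℂ, V w = ∫ z in Ω, vfun g (Mob w (T z)) * (f z : ℂ)) :
    ContinuousOn V (closedBall (0:ℂ) 1) ∧
    (∀ w : ℂ, ‖w‖ = 1 →
      V w = (g 1 : ℂ) * ((∫ z in Ω, f z : ℝ) : ℂ) * w ∧ V w ≠ 0) ∧
    ∃ w ∈ ball (0:ℂ) 1, V w = 0 :=
  stmt13_general Ω hΩo f hfi hfpos g hgc hg0 hg1 T hTc hTmap V hV
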